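/- arXiv:2502.10772 — 2 statements merged into one kernel-verified Lean document; each statement's English description precedes it below -/
import Mathlib

section
/- Let G be a set of square-integrable measurable real functions on a probability space, Ĝ the set of square-integrable measurable functions g such that some sequence (g_n) in G satisfies [g_n] → [g] in L^2(μ), and B := σ(G). Then B ⊆ σ(Ĝ) ⊆ B̂, where B̂ is the augmentation of B by μ-trivial events. -/
open MeasureTheory

/-- The μ-trivial events: measurable sets of measure 0 or 1. -/
def trivialSets {Ω : Type*} (m₀ : MeasurableSpace Ω) (μ : @Measure Ω m₀) : Set (Set Ω) :=
  {t | MeasurableSet[m₀] t ∧ (μ t = 0 ∨ μ t = 1)}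

/-- `B_∩ := {B ∩ T : B ∈ B, T ∈ T}` for a sub-σ-algebra `m`. -/
def interSets {Ω : Type*} (m₀ : MeasurableSpace Ω) (μ : @Measure Ω m₀)
    (m : MeasurableSpace Ω) : Set (Set Ω) :=
  {s | ∃ b t, MeasurableSet[m] b ∧ t ∈ trivialSets m₀ μ ∧ s = b ∩ t}

/-- The augmentation `B̂ := σ(B_∩)` of a sub-σ-algebra by the μ-trivial events. -/
def aug {Ω : Type*} (m₀ : MeasurableSpace Ω) (μ : @Measure Ω m₀)
    (m : MeasurableSpace Ω) : MeasurableSpace Ω :=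
  MeasurableSpace.generateFrom (interSets m₀ μ m)

/-!
If `uₙ ∈ G` converge to `g` in `L²`, a subsequence converges almost everywhere, so `g` agrees
off a `μ`-null measurable set `N` with the `σ(G)`-measurable function `g' := limsup u_{n_k}`.
Then `g⁻¹' t = (g'⁻¹' t \ N) ∪ (g⁻¹' t ∩ N)`, and `g'⁻¹' t = g'⁻¹' t ∩ Ω`, `N = Ω ∩ N` and
`g⁻¹' t ∩ N = Ω ∩ (g⁻¹' t ∩ N)` are generators of the augmentation.
-/

section Augmentation

variable {Ω : Type*} {m m₀ : MeasurableSpace Ω} {μ : @Measure Ω m₀}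

lemma le_aug [IsProbabilityMeasure μ] : m ≤ aug m₀ μ m := fun s hs =>
  MeasurableSpace.measurableSet_generateFrom
    ⟨s, Set.univ, hs, ⟨MeasurableSet.univ, Or.inr measure_univ⟩, (Set.inter_univ s).symm⟩

lemma measurableSet_aug_of_measure_eq_zero {s : Set Ω} (hs : MeasurableSet[m₀] s)
    (hs₀ : μ s = 0) : MeasurableSet[aug m₀ μ m] s :=
  MeasurableSpace.measurableSet_generateFrom
    ⟨Set.univ, s, MeasurableSet.univ, ⟨hs, Or.inl hs₀⟩, (Set.univ_inter s).symm⟩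

lemma measurable_aug_of_ae_eq [IsProbabilityMeasure μ] {β : Type*} [MeasurableSpace β]
    {f f' : Ω → β} (hf : Measurable[m₀] f) (hf' : Measurable[m] f') (h : f =ᵐ[μ] f') :
    Measurable[aug m₀ μ m] f := by
  intro t ht
  obtain ⟨N, hfN, hN, hN₀⟩ := exists_measurable_superset_of_null h
  have hdecomp : f ⁻¹' t = (f' ⁻¹' t \ N) ∪ (f ⁻¹' t ∩ N) := by
    ext x
    by_cases hx : x ∈ N
    · simp [hx]
    · have hfx : f x = f' x := not_not.mp fun hne => hx (hfN hne)
      simp [hx, hfx]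
  rw [hdecomp]
  exact ((le_aug _ (hf' ht)).diff (measurableSet_aug_of_measure_eq_zero hN hN₀)).union
    (measurableSet_aug_of_measure_eq_zero ((hf ht).inter hN)
      (measure_mono_null Set.inter_subset_right hN₀))

end Augmentation

lemma MeasureTheory.TendstoInMeasure.exists_measurable_ae_eq {Ω : Type*}
    {m m₀ : MeasurableSpace Ω} {μ : @Measure Ω m₀} {u : ℕ → Ω → ℝ} {g : Ω → ℝ}
    (h : TendstoInMeasure μ u Filter.atTop g)
    (hu : ∀ n, Measurable[m] (u n)) : ∃ g', Measurable[m] g' ∧ g =ᵐ[μ] g' := by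
  obtain ⟨ns, -, hae⟩ := h.exists_seq_tendsto_ae
  refine ⟨fun x => Filter.limsup (fun i => u (ns i) x) Filter.atTop,
    Measurable.limsup fun i => hu (ns i), ?_⟩
  filter_upwards [hae] with x hx
  exact hx.limsup_eq.symm

lemma measurable_biSup_comap {Ω β : Type*} [MeasurableSpace β] {G : Set (Ω → β)} {g : Ω → β}
    (hg : g ∈ G) : Measurable[⨆ g ∈ G, MeasurableSpace.comap g inferInstance] g :=
  measurable_iff_comap_le.mpr
    (le_iSup₂ (f := fun g (_ : g ∈ G) => MeasurableSpace.comap g inferInstance) g hg)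

/-- Let `G` be a set of square-integrable measurable real functions, `Ĝ` the set of
square-integrable measurable functions that are `L²(μ)`-limits of sequences from `G`, and
`B := σ(G)`. Then `B ⊆ σ(Ĝ) ⊆ B̂`. -/
theorem stmt8 {Ω : Type*} [m₀ : MeasurableSpace Ω] (μ : Measure Ω) [IsProbabilityMeasure μ]
    (G : Set (Ω → ℝ)) (hG : ∀ g ∈ G, Measurable g ∧ MemLp g 2 μ)
    (Ghat : Set (Ω → ℝ))
    (hGhat : Ghat = {g | Measurable g ∧ MemLp g 2 μ ∧
      ∃ u : ℕ → Ω → ℝ, (∀ n, u n ∈ G) ∧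
        Filter.Tendsto (fun n => eLpNorm (u n - g) 2 μ) Filter.atTop (nhds 0)}) :
    (⨆ g ∈ G, MeasurableSpace.comap g inferInstance) ≤
        (⨆ g ∈ Ghat, MeasurableSpace.comap g inferInstance) ∧
      (⨆ g ∈ Ghat, MeasurableSpace.comap g inferInstance) ≤
        aug m₀ μ (⨆ g ∈ G, MeasurableSpace.comap g inferInstance) := by
  subst hGhat
  constructor
  · refine iSup₂_le fun g hg => (measurable_biSup_comap ?_).comap_le
    exact ⟨(hG g hg).1, (hG g hg).2, fun _ => g, fun _ => hg, by simp⟩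
  · refine iSup₂_le fun g hg => ?_
    obtain ⟨hg, -, u, huG, hconv⟩ := hg
    have hu : TendstoInMeasure μ u Filter.atTop g :=
      tendstoInMeasure_of_tendsto_eLpNorm two_ne_zero
        (fun n => (hG _ (huG n)).1.aestronglyMeasurable) hg.aestronglyMeasurable hconv
    obtain ⟨g', hg', hgg'⟩ := hu.exists_measurable_ae_eq fun n => measurable_biSup_comap (huG n)
    exact (measurable_aug_of_ae_eq hg hg' hgg').comap_le
end

section
/- In the setting of the previous statement, for a non-empty subset J ⊆ I let L : H → ℓ²(J), L f := (⟨f, e_j⟩)_{j∈J}, and Y := L X. Then the minimum-norm solution operator M_W : W_Y → W_X defined by M_W w := argmin{‖w_x‖_{W_X} : L w_x = w} is given by M_W w = Σ_{j∈J} w_j e_j, and it extends uniquely to a bounded linear operator M : ℓ²(J) → H given by the same formula, satisfying ‖M w‖_H ≤ ‖w‖_{ℓ²(J)}. -/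
open MeasureTheory
open scoped RealInnerProductSpace

/-- In the eigenbasis setting of the previous statement (Hilbert basis `(e_i)_{i∈I}` of `H`,
eigenvalues `λ_i > 0`, Cameron–Martin norm `‖u‖²_{W_X} = ∑ ⟪u, e_i⟫²/λ_i`), let `J ⊆ I` be
non-empty, `L f := (⟪f, e_j⟫)_{j∈J} ∈ ℓ²(J)`, and `w ∈ ℓ²(J)`. Then `M w := ∑_{j∈J} w_j e_j`
satisfies `‖M w‖_H ≤ ‖w‖_{ℓ²(J)}` (so `M` is a bounded extension of the minimum-norm solution
operator), `L (M w) = w`, and `M w` is the minimum-`W_X`-norm solution of `L u = w`: for every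
`u` in the Cameron–Martin space with `L u = w` one has `M w ∈ W_X` and
`∑ ⟪M w, e_i⟫²/λ_i ≤ ∑ ⟪u, e_i⟫²/λ_i`. -/
theorem stmt19 {H I : Type*}
    [NormedAddCommGroup H] [InnerProductSpace ℝ H] [CompleteSpace H]
    [TopologicalSpace.SeparableSpace H]
    (lam : I → ℝ) (hlam : ∀ i, 0 < lam i)
    (bH : HilbertBasis I ℝ H)
    (J : Set I) (hJ : J.Nonempty)
    (w : lp (fun _ : J => ℝ) 2)
    (Mw : H) (hMw : Mw = ∑' j : J, w j • bH (j : I)) :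
    ‖Mw‖ ≤ ‖w‖ ∧
      (∀ j : J, ⟪Mw, bH (j : I)⟫ = w j) ∧
      (∀ i : I, i ∉ J → ⟪Mw, bH i⟫ = 0) ∧
      (∀ u : H, Summable (fun i => ⟪u, bH i⟫ ^ 2 / lam i) →
        (∀ j : J, ⟪u, bH (j : I)⟫ = w j) →
        Summable (fun i => ⟪Mw, bH i⟫ ^ 2 / lam i) ∧
          ∑' i, ⟪Mw, bH i⟫ ^ 2 / lam i ≤ ∑' i, ⟪u, bH i⟫ ^ 2 / lam i) := by
  classical
  set v : ∀ _ : I, ℝ := fun i => if h : i ∈ J then w ⟨i, h⟩ else 0 with hv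
  have hvJ : ∀ j : J, v (j : I) = w j := fun j => by
    simp [hv, j.2]
  have hp2 : (0:ℝ) < (2 : ENNReal).toReal := by norm_num
  have hwsum : Summable (fun j : J => ‖w j‖ ^ (2 : ENNReal).toReal) :=
    (memℓp_gen_iff hp2).1 (lp.memℓp w)
  have hsupp : Function.support (fun i : I => ‖v i‖ ^ (2 : ENNReal).toReal) ⊆ J := by
    intro i hi
    by_contra h
    apply hi
    simp [hv, h, Real.zero_rpow (ne_of_gt hp2)]
  have hcomp : ((fun i : I => ‖v i‖ ^ (2 : ENNReal).toReal) ∘ ((↑) : J → I))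
      = fun j : J => ‖w j‖ ^ (2 : ENNReal).toReal := by
    funext j; simp only [Function.comp]; rw [hvJ j]
  have hvsum : Summable (fun i : I => ‖v i‖ ^ (2 : ENNReal).toReal) := by
    have h := hwsum.hasSum
    rw [← hcomp] at h
    exact ((hasSum_subtype_iff_of_support_subset hsupp).1 h).summable
  have hvmem : Memℓp v 2 := memℓp_gen hvsum
  set vlp : lp (fun _ : I => ℝ) 2 := ⟨v, hvmem⟩ with hvlp
  -- Mw = bH.repr.symm vlp
  have hHS : HasSum (fun i : I => vlp i • bH i) (bH.repr.symm vlp) :=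
    bH.hasSum_repr_symm vlp
  have hsuppv : Function.support (fun i : I => vlp i • bH i) ⊆ J := by
    intro i hi
    by_contra h
    apply hi
    simp [hvlp, hv, h]
  have hHSJ : HasSum (fun j : J => w j • bH (j : I)) (bH.repr.symm vlp) := by
    have := (hasSum_subtype_iff_of_support_subset hsuppv).2 hHS
    convert this using 1
    funext j
    simp [Function.comp, hvlp, hvJ j]
  have hMw' : Mw = bH.repr.symm vlp := by rw [hMw, hHSJ.tsum_eq]
  have hrepr : bH.repr Mw = vlp := by rw [hMw', LinearIsometryEquiv.apply_symm_apply]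
  have hinner : ∀ i : I, ⟪Mw, bH i⟫ = v i := by
    intro i
    rw [real_inner_comm, ← bH.repr_apply_apply, hrepr]
  have hinnerJ : ∀ j : J, ⟪Mw, bH (j : I)⟫ = w j := fun j => by rw [hinner, hvJ]
  have hinnerJc : ∀ i : I, i ∉ J → ⟪Mw, bH i⟫ = 0 := fun i h => by
    rw [hinner]; simp [hv, h]
  refine ⟨?_, hinnerJ, hinnerJc, ?_⟩
  · -- norm bound: ‖Mw‖ = ‖vlp‖ = ‖w‖
    have h1 : ‖Mw‖ = ‖vlp‖ := by rw [hMw']; exact (bH.repr.symm.norm_map vlp)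
    have h2 : ‖vlp‖ = ‖w‖ := by
      rw [lp.norm_eq_tsum_rpow hp2 vlp, lp.norm_eq_tsum_rpow hp2 w]
      have heq : (∑' i : I, ‖vlp i‖ ^ (2 : ENNReal).toReal)
          = ∑' j : J, ‖w j‖ ^ (2 : ENNReal).toReal := by
        rw [show (fun i : I => ‖vlp i‖ ^ (2 : ENNReal).toReal)
            = fun i : I => ‖v i‖ ^ (2 : ENNReal).toReal from rfl,
          ← tsum_subtype_eq_of_support_subset hsupp]
        exact tsum_congr fun j => by rw [hvJ j]
      rw [heq]
    rw [h1, h2]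
  · intro u hu hLu
    have key : ∀ i : I, ⟪Mw, bH i⟫ ^ 2 / lam i ≤ ⟪u, bH i⟫ ^ 2 / lam i := by
      intro i
      by_cases h : i ∈ J
      · rw [hinnerJ ⟨i, h⟩, hLu ⟨i, h⟩]
      · rw [hinnerJc i h]
        have : (0:ℝ) ^ 2 / lam i = 0 := by simp
        rw [this]
        exact div_nonneg (sq_nonneg _) (hlam i).le
    have hnonneg : ∀ i : I, 0 ≤ ⟪Mw, bH i⟫ ^ 2 / lam i := fun i =>
      div_nonneg (sq_nonneg _) (hlam i).le
    exact ⟨Summable.of_nonneg_of_le hnonneg key hu,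
      Summable.tsum_le_tsum key (Summable.of_nonneg_of_le hnonneg key hu) hu⟩
end
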